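/- arXiv:2511.06361 — 8 statements merged into one kernel-verified Lean document; each statement's English description precedes it below -/
import Mathlib

section
/- A law L in a game (A, Δ, P) is gap-free if and only if L is useful, or there is an agent a ∈ A and a safe action of agent a in the law-imposed game (A, Δ^L, P^L). -/
namespace MAS

variable {A α : Type*}

/-- The set of profiles of an action family `Δ`: functions assigning to each
agent `a` an action in `Δ a`. -/
def Profiles (Δ : A → Set α) : Set (A → α) := {δ | ∀ a, δ a ∈ Δ a}

/-- The support set `S(δ)` of a profile `δ`. -/
def supp (δ : A → α) : Set α := Set.range δ

/-- A law in the game: a set of actions `L ⊆ ⋃ a, Δ a`. -/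
def IsLaw (Δ : A → Set α) (L : Set α) : Prop := L ⊆ ⋃ a, Δ a

/-- The law-imposed action sets `Δ_a^L = Δ_a \ L`. -/
def lawActions (Δ : A → Set α) (L : Set α) : A → Set α := fun a => Δ a \ L

/-- The law-imposed prohibition `P^L = P ∩ ∏ Δ^L`. -/
def lawProhib (Δ : A → Set α) (P : Set (A → α)) (L : Set α) : Set (A → α) :=
  P ∩ Profiles (lawActions Δ L)

/-- A law `L` is useful if `P^L = ∅` in the law-imposed game. -/
def Useful (Δ : A → Set α) (P : Set (A → α)) (L : Set α) : Prop :=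
  lawProhib Δ P L = ∅

/-- An action `d` is a safe action of agent `a` in the game `(A, Δ, P)` if
`d ∈ Δ a` and `δ a ≠ d` for every prohibited profile `δ ∈ P`. -/
def SafeAction (Δ : A → Set α) (P : Set (A → α)) (a : A) (d : α) : Prop :=
  d ∈ Δ a ∧ ∀ δ ∈ P, δ a ≠ d

/-- In a prohibited profile `δ ∈ P`, agent `a` is responsible under law `L` if
`δ a ∈ L` (legally), or `S(δ) ∩ L = ∅` and a safe action of agent `a` exists in
the law-imposed game (counterfactually). -/
def Responsible (Δ : A → Set α) (P : Set (A → α)) (L : Set α) (δ : A → α) (a : A) : Prop :=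
  δ a ∈ L ∨ (supp δ ∩ L = ∅ ∧ ∃ d, SafeAction (lawActions Δ L) (lawProhib Δ P L) a d)

/-- A law `L` is gap-free if in each prohibited profile there is at least one
responsible agent. -/
def GapFree (Δ : A → Set α) (P : Set (A → α)) (L : Set α) : Prop :=
  ∀ δ ∈ P, ∃ a, Responsible Δ P L δ a

/-- An action `d` is safable if there is a law `L` and an agent `a` such that
`d` is a safe action of agent `a` in the law-imposed game. -/
def Safable (Δ : A → Set α) (P : Set (A → α)) (d : α) : Prop :=
  ∃ L, IsLaw Δ L ∧ ∃ a, SafeAction (lawActions Δ L) (lawProhib Δ P L) a d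

/-- `C` is a vertex cover of the hypergraph `(V, E)`. -/
def IsVC (V : Set α) (E : Set (Set α)) (C : Set α) : Prop :=
  C ⊆ V ∧ ∀ e ∈ E, (C ∩ e).Nonempty

/-- A minimal vertex cover. -/
def MinimalVC (V : Set α) (E : Set (Set α)) (C : Set α) : Prop :=
  IsVC V E C ∧ ∀ C', C' ⊂ C → ¬ IsVC V E C'

/-- A minimal gap-free law: a gap-free law no strict subset of which is gap-free. -/
def MinimalGapFree (Δ : A → Set α) (P : Set (A → α)) (L : Set α) : Prop :=
  GapFree Δ P L ∧ ∀ L', L' ⊂ L → ¬ GapFree Δ P L'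

/-- `S(P) = {S(δ) : δ ∈ P}`. -/
def suppSet (P : Set (A → α)) : Set (Set α) := (fun δ => supp δ) '' P

/-- The edge set `E^C = {C ∩ e : e ∈ E}` of the induced subgraph. -/
def inducedEdges (E : Set (Set α)) (C : Set α) : Set (Set α) := (fun e => C ∩ e) '' E

/-- The vertex set `(⋃ Δ) \ {d}` of the hypergraph `H^{a,d}`. -/
def Hvertices (Δ : A → Set α) (d : α) : Set α := (⋃ a, Δ a) \ {d}

/-- The edge set `{S(δ) \ {d} : δ ∈ P, δ a = d}` of the hypergraph `H^{a,d}`. -/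
def Hedges (P : Set (A → α)) (a : A) (d : α) : Set (Set α) :=
  (fun δ => supp δ \ {d}) '' {δ ∈ P | δ a = d}

theorem supp_inter_eq_empty_iff (δ : A → α) (L : Set α) :
    supp δ ∩ L = ∅ ↔ ∀ a, δ a ∉ L := by
  simp only [supp, Set.eq_empty_iff_forall_notMem, Set.mem_inter_iff, Set.mem_range,
    not_and, forall_exists_index, forall_apply_eq_imp_iff]

theorem mem_lawProhib_iff {Δ : A → Set α} {P : Set (A → α)} (hP : P ⊆ Profiles Δ)
    {L : Set α} {δ : A → α} :
    δ ∈ lawProhib Δ P L ↔ δ ∈ P ∧ supp δ ∩ L = ∅ := by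
  rw [supp_inter_eq_empty_iff]
  exact ⟨fun ⟨hδ, hδL⟩ => ⟨hδ, fun a => (hδL a).2⟩,
    fun ⟨hδ, hδL⟩ => ⟨hδ, fun a => ⟨hP hδ a, hδL a⟩⟩⟩

theorem useful_iff (Δ : A → Set α) (P : Set (A → α)) (L : Set α) :
    Useful Δ P L ↔ ∀ δ ∈ P, δ ∉ lawProhib Δ P L := by
  rw [Useful, Set.eq_empty_iff_forall_notMem]
  exact ⟨fun h δ _ => h δ, fun h δ hδ => h δ hδ.1 hδ⟩

theorem responsible_iff_of_supp_inter_eq_empty {Δ : A → Set α} {P : Set (A → α)} {L : Set α}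
    {δ : A → α} (hδ : supp δ ∩ L = ∅) (a : A) :
    Responsible Δ P L δ a ↔ ∃ d, SafeAction (lawActions Δ L) (lawProhib Δ P L) a d := by
  have hδa : δ a ∉ L := (supp_inter_eq_empty_iff δ L).1 hδ a
  simp only [Responsible, hδa, hδ, true_and, false_or]

/-- A prohibited profile outside `P^L` meets `L`, so it has a legally responsible agent; one inside
`P^L` can only have counterfactually responsible agents, and whether those exist does not depend
on the profile. -/
theorem exists_responsible_iff {Δ : A → Set α} {P : Set (A → α)} (hP : P ⊆ Profiles Δ)
    (L : Set α) {δ : A → α} (hδ : δ ∈ P) :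
    (∃ a, Responsible Δ P L δ a) ↔
      δ ∉ lawProhib Δ P L ∨ ∃ a d, SafeAction (lawActions Δ L) (lawProhib Δ P L) a d := by
  by_cases hδL : supp δ ∩ L = ∅
  · simp only [responsible_iff_of_supp_inter_eq_empty hδL, (mem_lawProhib_iff hP).2 ⟨hδ, hδL⟩,
      not_true_eq_false, false_or]
  · obtain ⟨a, ha⟩ := not_forall_not.1 ((supp_inter_eq_empty_iff δ L).not.1 hδL)
    exact iff_of_true ⟨a, Or.inl ha⟩ (Or.inl fun h => hδL ((mem_lawProhib_iff hP).1 h).2)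

theorem gapFree_iff_general {A α : Type*} (Δ : A → Set α) (P : Set (A → α)) (hP : P ⊆ Profiles Δ)
    (L : Set α) :
    GapFree Δ P L ↔
      Useful Δ P L ∨
        ∃ a d, SafeAction (lawActions Δ L) (lawProhib Δ P L) a d := by
  calc GapFree Δ P L
      ↔ ∀ δ ∈ P, δ ∉ lawProhib Δ P L ∨
          ∃ a d, SafeAction (lawActions Δ L) (lawProhib Δ P L) a d :=
        forall₂_congr fun _ hδ => exists_responsible_iff hP L hδ
    _ ↔ _ := by simp only [useful_iff, forall_or_right]

/-- A law `L` in a game `(A, Δ, P)` is gap-free if and only if `L`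
is useful, or there is an agent `a ∈ A` and a safe action of agent `a` in the
law-imposed game `(A, Δ^L, P^L)`. -/
theorem gapFree_iff {A α : Type*} [Fintype A] [Nonempty A]
    (Δ : A → Set α) (P : Set (A → α))
    (hΔfin : ∀ a, (Δ a).Finite) (hP : P ⊆ Profiles Δ)
    (L : Set α) (hL : IsLaw Δ L) :
    GapFree Δ P L ↔
      Useful Δ P L ∨
        ∃ a d, SafeAction (lawActions Δ L) (lawProhib Δ P L) a d :=
  gapFree_iff_general Δ P hP L

end MAS
end

section
/- Let (V, E) be a k-graph and let the game G_{(k,V,E)} be constructed from it. Then a set C is a vertex cover of the k-graph (V, E) if and only if C is a useful law in the game G_{(k,V,E)}. -/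
/-! A law `L` removes from the game exactly the profiles whose support meets `L`, and each
prohibited profile `δ^e` of `G_{(k,V,E)}` is a profile of the game with support `e`; so `L` is
useful iff it meets every edge. With at least one agent, `L` is a law iff `L ⊆ V`. -/

namespace MAS

variable {A α : Type*}

theorem isLaw_const_iff [Nonempty A] {V L : Set α} :
    IsLaw (fun _ : A => V) L ↔ L ⊆ V := by
  rw [IsLaw, Set.iUnion_const]

theorem mem_profiles_lawActions_iff {Δ : A → Set α} {L : Set α} {δ : A → α} :
    δ ∈ Profiles (lawActions Δ L) ↔ δ ∈ Profiles Δ ∧ Disjoint (supp δ) L := by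
  simp only [Profiles, lawActions, supp, Set.mem_ofPred_eq, Set.mem_sdiff, forall_and,
    Set.disjoint_left, Set.forall_mem_range]

theorem useful_iff_forall_inter_supp_nonempty {Δ : A → Set α} {P : Set (A → α)} {L : Set α}
    (hP : P ⊆ Profiles Δ) : Useful Δ P L ↔ ∀ δ ∈ P, (L ∩ supp δ).Nonempty := by
  simp only [Useful, lawProhib, Set.eq_empty_iff_forall_notMem, Set.mem_inter_iff,
    mem_profiles_lawActions_iff, Set.inter_comm L, ← Set.not_disjoint_iff_nonempty_inter]
  exact forall_congr' fun δ => ⟨fun h hδ => (h ⟨hδ, hP hδ, ·⟩), fun h ⟨hδ, _, hdisj⟩ => h hδ hdisj⟩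

theorem useful_const_image_iff {V L : Set α} {E : Set (Set α)} (f : Set α → (A → α))
    (hf : ∀ e ∈ E, supp (f e) = e) (hEV : ∀ e ∈ E, e ⊆ V) :
    Useful (fun _ : A => V) (f '' E) L ↔ ∀ e ∈ E, (L ∩ e).Nonempty := by
  have hP : f '' E ⊆ Profiles (fun _ : A => V) := by
    rintro _ ⟨e, he, rfl⟩
    exact Set.range_subset_iff.mp ((hf e he).trans_subset (hEV e he))
  rw [useful_iff_forall_inter_supp_nonempty hP, Set.forall_mem_image]
  exact forall₂_congr fun e he => by rw [hf e he]

theorem isVC_iff_usefulLaw_general {α : Type*} (k : ℕ) (hk : 1 ≤ k)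
    (V : Set α) (E : Set (Set α))
    (hE : ∀ e ∈ E, e ⊆ V ∧ 1 ≤ e.ncard ∧ e.ncard ≤ k)
    (f : Set α → (Fin k → α)) (hf : ∀ e ∈ E, Set.range (f e) = e)
    (C : Set α) :
    IsVC V E C ↔
      (IsLaw (fun _ : Fin k => V) C ∧ Useful (fun _ : Fin k => V) (f '' E) C) := by
  have : Nonempty (Fin k) := ⟨⟨0, hk⟩⟩
  rw [IsVC, isLaw_const_iff, useful_const_image_iff f hf fun e he => (hE e he).1]

/-- Let `(V, E)` be a `k`-graph and let the game `G_{(k,V,E)}` be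
constructed from it (agents `[k]`, action set `V` for each agent, and prohibition
`{δ^e : e ∈ E}` where `S(δ^e) = e`). Then a set `C` is a vertex cover of the
`k`-graph `(V, E)` if and only if `C` is a useful law in the game `G_{(k,V,E)}`. -/
theorem isVC_iff_usefulLaw {α : Type*} (k : ℕ) (hk : 1 ≤ k)
    (V : Set α) (E : Set (Set α)) (hV : V.Finite)
    (hE : ∀ e ∈ E, e ⊆ V ∧ 1 ≤ e.ncard ∧ e.ncard ≤ k)
    (f : Set α → (Fin k → α)) (hf : ∀ e ∈ E, Set.range (f e) = e)
    (C : Set α) :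
    IsVC V E C ↔
      (IsLaw (fun _ : Fin k => V) C ∧ Useful (fun _ : Fin k => V) (f '' E) C) :=
  isVC_iff_usefulLaw_general k hk V E hE f hf C

end MAS
end

section
/- Let (V, E) be a k-graph and let the game G_{(k,V,E)} be constructed from it. Then a set C is a vertex cover of the k-graph (V, E) if and only if C is a useful reduction of the law V in the game G_{(k,V,E)}. -/
namespace MAS

variable {A α : Type*}

/-!
A law is useful exactly when it meets the support of every prohibited profile, so the useful laws
of a game are the vertex covers of its support hypergraph `(⋃ Δ, S(P))`. In `G_{(k,V,E)}` that
hypergraph is `(V, E)` itself.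
-/

section

variable {Δ : A → Set α} {P : Set (A → α)} {L : Set α}

theorem useful_iff_forall_exists_mem :
    Useful Δ P L ↔ ∀ δ ∈ P, δ ∈ Profiles Δ → ∃ a, δ a ∈ L := by
  simp only [Useful, lawProhib, Set.eq_empty_iff_forall_notMem, Set.mem_inter_iff, Profiles,
    lawActions, Set.mem_ofPred_eq, Set.mem_sdiff]
  grind

theorem useful_iff_forall_supp_inter_nonempty (hP : P ⊆ Profiles Δ) :
    Useful Δ P L ↔ ∀ δ ∈ P, (L ∩ supp δ).Nonempty := by
  rw [useful_iff_forall_exists_mem]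
  refine forall₂_congr fun δ hδ => ?_
  simp only [hP hδ, true_imp_iff, supp, Set.inter_comm L, Set.inter_nonempty, Set.mem_range,
    exists_exists_eq_and]

theorem isVC_suppSet_iff (hP : P ⊆ Profiles Δ) :
    IsVC (⋃ a, Δ a) (suppSet P) L ↔ IsLaw Δ L ∧ Useful Δ P L := by
  rw [IsVC, useful_iff_forall_supp_inter_nonempty hP, suppSet, Set.forall_mem_image, IsLaw]

end

theorem isVC_iff_usefulReduction_general {α : Type*} (k : ℕ) (hk : 1 ≤ k)
    (V : Set α) (E : Set (Set α))
    (hE : ∀ e ∈ E, e ⊆ V ∧ 1 ≤ e.ncard ∧ e.ncard ≤ k)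
    (f : Set α → (Fin k → α)) (hf : ∀ e ∈ E, Set.range (f e) = e)
    (C : Set α) :
    IsVC V E C ↔
      (IsLaw (fun _ : Fin k => V) C ∧ Useful (fun _ : Fin k => V) (f '' E) C ∧
        C ⊆ V) := by
  have : Nonempty (Fin k) := ⟨⟨0, hk⟩⟩
  have hprof : f '' E ⊆ Profiles (fun _ : Fin k => V) := by
    rintro _ ⟨e, he, rfl⟩ i
    exact (hE e he).1 ((hf e he).subset (Set.mem_range_self i))
  have hsupp : suppSet (f '' E) = E := by
    rw [suppSet, Set.image_image]
    exact (Set.image_congr fun e he => hf e he).trans (Set.image_id' E)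
  rw [← and_assoc, ← isVC_suppSet_iff hprof, Set.iUnion_const, hsupp, iff_self_and]
  exact And.left

/-- Let `(V, E)` be a `k`-graph and let the game `G_{(k,V,E)}` be
constructed from it. Then a set `C` is a vertex cover of the `k`-graph `(V, E)`
if and only if `C` is a useful reduction of the law `V` in the game `G_{(k,V,E)}`,
i.e. a useful law contained in `V`. -/
theorem isVC_iff_usefulReduction {α : Type*} (k : ℕ) (hk : 1 ≤ k)
    (V : Set α) (E : Set (Set α)) (hV : V.Finite)
    (hE : ∀ e ∈ E, e ⊆ V ∧ 1 ≤ e.ncard ∧ e.ncard ≤ k)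
    (f : Set α → (Fin k → α)) (hf : ∀ e ∈ E, Set.range (f e) = e)
    (C : Set α) :
    IsVC V E C ↔
      (IsLaw (fun _ : Fin k => V) C ∧ Useful (fun _ : Fin k => V) (f '' E) C ∧
        C ⊆ V) :=
  isVC_iff_usefulReduction_general k hk V E hE f hf C

end MAS
end

section
/- A set L is a useful law in a game (A, Δ, P) if and only if L is a vertex cover of the hypergraph (⋃Δ, S(P)), where S(P) = {S(δ) : δ ∈ P}. -/
namespace MAS

variable {A α : Type*}

theorem isVC_suppSet_iff_s5 {V L : Set α} {P : Set (A → α)} :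
    IsVC V (suppSet P) L ↔ L ⊆ V ∧ ∀ δ ∈ P, (L ∩ supp δ).Nonempty := by
  simp only [IsVC, suppSet, Set.forall_mem_image]

theorem usefulLaw_iff_isVC_general {A α : Type*}
    (Δ : A → Set α) (P : Set (A → α))
    (hP : P ⊆ Profiles Δ)
    (L : Set α) :
    (IsLaw Δ L ∧ Useful Δ P L) ↔ IsVC (⋃ a, Δ a) (suppSet P) L := by
  rw [useful_iff_forall_inter_supp_nonempty hP, isVC_suppSet_iff_s5, IsLaw]

/-- A set `L` is a useful law in a game `(A, Δ, P)` if and only if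
`L` is a vertex cover of the hypergraph `(⋃Δ, S(P))`. -/
theorem usefulLaw_iff_isVC {A α : Type*} [Fintype A] [Nonempty A]
    (Δ : A → Set α) (P : Set (A → α))
    (hΔfin : ∀ a, (Δ a).Finite) (hP : P ⊆ Profiles Δ)
    (L : Set α) :
    (IsLaw Δ L ∧ Useful Δ P L) ↔ IsVC (⋃ a, Δ a) (suppSet P) L :=
  usefulLaw_iff_isVC_general Δ P hP L

end MAS
end

section
/- Let (A, Δ, P) be a game, γ ∉ A a fresh agent, and p, n two distinct fresh actions not in ⋃Δ, and let (Ā, Δ̄, P̄) be the game constructed from these data. Then a set L ⊆ ⋃Δ is a useful law in the game (A, Δ, P) if and only if L is a gap-free law in the game (Ā, Δ̄, P̄). -/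
namespace MAS

variable {A α : Type*}

variable {A α : Type*}

/-- The action sets of the game `(Ā, Δ̄, P̄)`: the fresh agent `γ` is modelled as
`none : Option A`, with `Δ̄_γ = {p, n}` and `Δ̄_a = Δ_a ∪ {n}` for `a ∈ A`. -/
def barActions (Δ : A → Set α) (p n : α) : Option A → Set α
  | some a => Δ a ∪ {n}
  | none => {p, n}

/-- The prohibition `P̄ = P̄₁ ∪ P̄₂ ∪ P̄₃` of the game `(Ā, Δ̄, P̄)`. -/
def barProhibition (Δ : A → Set α) (P : Set (A → α)) (p n : α) : Set (Option A → α) :=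
  {δ' | δ' none = p ∧ ∃ δ ∈ P, ∀ a : A, δ' (some a) = δ a} ∪
    {δ' | ∃ a : A, δ' (some a) ∈ Δ a ∧ ∀ b : Option A, b ≠ some a → δ' b = n} ∪
    {δ' | ∀ b : Option A, δ' b = n}

/-!
Since `n ∉ L`, the all-`n` profile survives in `P̄^L`, and in a game whose law-imposed
prohibition is nonempty, gap-freeness means exactly that some agent has a safe action there
(no agent of a profile of `P^L` plays an action of `L`, so responsibility can only be
counterfactual). In `P̄^L` the all-`n` profile and the profiles of `P̄₂` rule out every
candidate except `p` for `γ`, and `p` is safe for `γ` exactly when no profile of `P` survives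
the law, i.e. when `L` is useful.
-/

section LawImposedGame

variable {Δ : A → Set α} {P : Set (A → α)} {L : Set α}

theorem gapFree_of_safeAction {c : A} {d : α}
    (hd : SafeAction (lawActions Δ L) (lawProhib Δ P L) c d) : GapFree Δ P L := by
  intro δ _
  by_cases hS : supp δ ∩ L = ∅
  · exact ⟨c, Or.inr ⟨hS, d, hd⟩⟩
  · obtain ⟨_, ⟨a, rfl⟩, ha⟩ := Set.nonempty_iff_ne_empty.2 hS
    exact ⟨a, Or.inl ha⟩

theorem exists_safeAction_of_gapFree (hL : GapFree Δ P L) (hne : (lawProhib Δ P L).Nonempty) :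
    ∃ a d, SafeAction (lawActions Δ L) (lawProhib Δ P L) a d := by
  obtain ⟨δ, hδP, hδL⟩ := hne
  obtain ⟨a, hlegal | ⟨-, d, hd⟩⟩ := hL δ hδP
  · exact absurd hlegal (hδL a).2
  · exact ⟨a, d, hd⟩

theorem gapFree_iff_exists_safeAction (hne : (lawProhib Δ P L).Nonempty) :
    GapFree Δ P L ↔ ∃ a d, SafeAction (lawActions Δ L) (lawProhib Δ P L) a d :=
  ⟨fun hL => exists_safeAction_of_gapFree hL hne, fun ⟨_, _, hd⟩ => gapFree_of_safeAction hd⟩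

end LawImposedGame

section BarGame

variable {Δ : A → Set α} {P : Set (A → α)} {p n : α} {L : Set α}

theorem const_mem_lawProhib_bar (hnL : n ∉ L) :
    Function.const (Option A) n ∈
      lawProhib (barActions Δ p n) (barProhibition Δ P p n) L := by
  refine ⟨Or.inr fun _ => rfl, fun b => ⟨?_, hnL⟩⟩
  cases b <;> simp [barActions]

theorem update_const_mem_lawProhib_bar [DecidableEq A] {a : A} {d : α} (hd : d ∈ Δ a \ L)
    (hnL : n ∉ L) :
    Function.update (Function.const (Option A) n) (some a) d ∈
      lawProhib (barActions Δ p n) (barProhibition Δ P p n) L := by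
  refine ⟨Or.inl (Or.inr ⟨a, by simpa using hd.1, fun b hb => by simp [hb]⟩), fun b => ?_⟩
  by_cases hb : b = some a
  · subst hb
    rw [Function.update_self]
    exact ⟨Or.inl hd.1, hd.2⟩
  · rw [Function.update_of_ne hb]
    refine ⟨?_, hnL⟩
    cases b <;> simp [barActions]

theorem elim'_mem_lawProhib_bar {δ : A → α} (hδ : δ ∈ lawProhib Δ P L) (hpL : p ∉ L) :
    Option.elim' p δ ∈ lawProhib (barActions Δ p n) (barProhibition Δ P p n) L := by
  refine ⟨Or.inl (Or.inl ⟨rfl, δ, hδ.1, fun _ => rfl⟩), fun b => ?_⟩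
  cases b with
  | none => exact ⟨Or.inl rfl, hpL⟩
  | some a => exact ⟨Or.inl (hδ.2 a).1, (hδ.2 a).2⟩

theorem exists_mem_of_mem_barProhibition (hpn : p ≠ n) {δ' : Option A → α}
    (hδ' : δ' ∈ barProhibition Δ P p n) (hγ : δ' none = p) :
    ∃ δ ∈ P, ∀ a, δ' (some a) = δ a := by
  rcases hδ' with (⟨-, h₁⟩ | ⟨a, -, h₂⟩) | h₃
  · exact h₁
  · exact absurd (hγ.symm.trans (h₂ none (Option.some_ne_none a).symm)) hpn
  · exact absurd (hγ.symm.trans (h₃ none)) hpn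

theorem safeAction_bar_none_iff_useful (hP : P ⊆ Profiles Δ) (hpn : p ≠ n) (hpL : p ∉ L) :
    SafeAction (lawActions (barActions Δ p n) L)
        (lawProhib (barActions Δ p n) (barProhibition Δ P p n) L) none p ↔ Useful Δ P L := by
  refine ⟨fun hsafe => ?_, fun hU => ⟨⟨Or.inl rfl, hpL⟩, ?_⟩⟩
  · rw [Useful, Set.eq_empty_iff_forall_notMem]
    intro δ hδ
    exact hsafe.2 _ (elim'_mem_lawProhib_bar hδ hpL) rfl
  · rintro δ' ⟨hδ'P, hδ'L⟩ hγ
    obtain ⟨δ, hδP, hδ'δ⟩ := exists_mem_of_mem_barProhibition hpn hδ'P hγ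
    refine Set.eq_empty_iff_forall_notMem.1 hU δ ⟨hδP, fun a => ⟨hP hδP a, ?_⟩⟩
    simpa [hδ'δ] using (hδ'L (some a)).2

theorem exists_safeAction_bar_iff_useful [DecidableEq A] (hP : P ⊆ Profiles Δ) (hpn : p ≠ n)
    (hpL : p ∉ L) (hnL : n ∉ L) :
    (∃ b d, SafeAction (lawActions (barActions Δ p n) L)
        (lawProhib (barActions Δ p n) (barProhibition Δ P p n) L) b d) ↔ Useful Δ P L := by
  refine ⟨?_, fun hU => ⟨none, p, (safeAction_bar_none_iff_useful hP hpn hpL).2 hU⟩⟩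
  rintro ⟨b, d, ⟨hdb, hdL⟩, hsafe⟩
  have hd_ne_n : d ≠ n := fun hdn => hsafe _ (const_mem_lawProhib_bar hnL) hdn.symm
  cases b with
  | none =>
    obtain rfl : d = p := by simpa [barActions, hd_ne_n] using hdb
    exact (safeAction_bar_none_iff_useful hP hpn hpL).1 ⟨⟨hdb, hdL⟩, hsafe⟩
  | some a =>
    have hdΔ : d ∈ Δ a := by simpa [barActions, hd_ne_n] using hdb
    exact absurd (Function.update_self _ _ _)
      (hsafe _ (update_const_mem_lawProhib_bar ⟨hdΔ, hdL⟩ hnL))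

end BarGame

theorem useful_iff_bar_gapFree_general {A α : Type*}
    (Δ : A → Set α) (P : Set (A → α))
    (hP : P ⊆ Profiles Δ)
    (p n : α) (hpn : p ≠ n) (hp : p ∉ ⋃ a, Δ a) (hn : n ∉ ⋃ a, Δ a)
    (L : Set α) (hL : L ⊆ ⋃ a, Δ a) :
    Useful Δ P L ↔ GapFree (barActions Δ p n) (barProhibition Δ P p n) L := by
  classical
  have hpL : p ∉ L := fun h => hp (hL h)
  have hnL : n ∉ L := fun h => hn (hL h)
  rw [gapFree_iff_exists_safeAction ⟨_, const_mem_lawProhib_bar hnL⟩,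
    exists_safeAction_bar_iff_useful hP hpn hpL hnL]

/-- Let `(A, Δ, P)` be a game, `γ ∉ A` a fresh agent (modelled as
`none : Option A`), and `p, n` two distinct fresh actions not in `⋃Δ`. Then a
set `L ⊆ ⋃Δ` is a useful law in the game `(A, Δ, P)` if and only if `L` is a
gap-free law in the game `(Ā, Δ̄, P̄)`. -/
theorem useful_iff_bar_gapFree {A α : Type*} [Fintype A] [Nonempty A]
    (Δ : A → Set α) (P : Set (A → α))
    (hΔfin : ∀ a, (Δ a).Finite) (hP : P ⊆ Profiles Δ)
    (p n : α) (hpn : p ≠ n) (hp : p ∉ ⋃ a, Δ a) (hn : n ∉ ⋃ a, Δ a)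
    (L : Set α) (hL : L ⊆ ⋃ a, Δ a) :
    Useful Δ P L ↔ GapFree (barActions Δ p n) (barProhibition Δ P p n) L :=
  useful_iff_bar_gapFree_general Δ P hP p n hpn hp hn L hL

end MAS
end

section
/- For a game (A, Δ, P), an action d ∈ ⋃Δ is safable if and only if S(δ) ≠ {d} for each profile δ ∈ P. -/
/-!
If some prohibited profile uses `d` alone, it survives every law that leaves `d` available, so
it prohibits `d` for every agent. Otherwise the law banning every action except `d` makes `d`
safe for any agent `a` with `d ∈ Δ a`: the only profile left uses `d` alone, and none of those is
prohibited.
-/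

namespace MAS

variable {A α : Type*}

theorem mem_lawProhib_of_supp_eq_singleton {Δ : A → Set α} {P : Set (A → α)} {L : Set α}
    {d : α} {δ : A → α} (hP : P ⊆ Profiles Δ) (hδ : δ ∈ P) (hsupp : supp δ = {d})
    (hdL : d ∉ L) : δ ∈ lawProhib Δ P L := by
  refine ⟨hδ, fun b => ?_⟩
  have hδb : δ b = d := Function.apply_eq_of_range_eq_singleton (f := δ) hsupp b
  exact ⟨hP hδ b, hδb ▸ hdL⟩

theorem eq_of_mem_profiles_lawActions_diff_singleton {Δ : A → Set α} {d : α} {δ : A → α}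
    (hδ : δ ∈ Profiles (lawActions Δ ((⋃ a, Δ a) \ {d}))) (b : A) : δ b = d := by
  by_contra hne
  exact (hδ b).2 ⟨Set.mem_iUnion_of_mem b (hδ b).1, hne⟩

theorem supp_ne_singleton_of_safable {Δ : A → Set α} {P : Set (A → α)} {d : α}
    (hP : P ⊆ Profiles Δ) (h : Safable Δ P d) : ∀ δ ∈ P, supp δ ≠ {d} := by
  rintro δ hδ hsupp
  obtain ⟨L, -, a, ⟨-, hdL⟩, hsafe⟩ := h
  exact hsafe δ (mem_lawProhib_of_supp_eq_singleton hP hδ hsupp hdL)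
    (Function.apply_eq_of_range_eq_singleton (f := δ) hsupp a)

theorem safable_of_supp_ne_singleton {Δ : A → Set α} {P : Set (A → α)} {d : α}
    (hd : d ∈ ⋃ a, Δ a) (h : ∀ δ ∈ P, supp δ ≠ {d}) : Safable Δ P d := by
  obtain ⟨a, hda⟩ := Set.mem_iUnion.1 hd
  refine ⟨(⋃ a, Δ a) \ {d}, Set.sdiff_subset, a, ⟨hda, fun hd' => hd'.2 rfl⟩, ?_⟩
  rintro δ ⟨hδP, hδ⟩ -
  have : Nonempty A := ⟨a⟩
  exact h δ hδP (Set.range_eq_singleton (eq_of_mem_profiles_lawActions_diff_singleton hδ))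

theorem safable_iff_general {A α : Type*}
    (Δ : A → Set α) (P : Set (A → α))
    (hP : P ⊆ Profiles Δ)
    (d : α) (hd : d ∈ ⋃ a, Δ a) :
    Safable Δ P d ↔ ∀ δ ∈ P, supp δ ≠ {d} :=
  ⟨supp_ne_singleton_of_safable hP, safable_of_supp_ne_singleton hd⟩

/-- For a game `(A, Δ, P)`, an action `d ∈ ⋃Δ` is safable if and
only if `S(δ) ≠ {d}` for each profile `δ ∈ P`. -/
theorem safable_iff {A α : Type*} [Fintype A] [Nonempty A]
    (Δ : A → Set α) (P : Set (A → α))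
    (hΔfin : ∀ a, (Δ a).Finite) (hP : P ⊆ Profiles Δ)
    (d : α) (hd : d ∈ ⋃ a, Δ a) :
    Safable Δ P d ↔ ∀ δ ∈ P, supp δ ≠ {d} :=
  safable_iff_general Δ P hP d hd

end MAS
end

section
/- A gap-free law L in a game (A, Δ, P) is minimal if and only if for each action d ∈ L, the law L \ {d} is not gap-free. -/
/-!
A law `L` is gap-free exactly when every prohibited profile meets `L` or the `L`-imposed game
has a safe action. Adding an action `d` to a gap-free law keeps the first alternative, and keeps
any safe action other than `d` safe; so a gap-free law stays gap-free when any single action is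
added, except possibly one. Hence a maximal gap-free proper subset of the finite law `L` misses
exactly one action `d` of `L`, i.e. it is `L \ {d}`.
-/

namespace MAS

variable {A α : Type*}

section

variable (Δ : A → Set α) (P : Set (A → α))

theorem gapFree_iff_s16 {L : Set α} :
    GapFree Δ P L ↔ (∀ δ ∈ P, (supp δ ∩ L).Nonempty) ∨
      ∃ a f, SafeAction (lawActions Δ L) (lawProhib Δ P L) a f := by
  constructor
  · intro h
    by_contra! hcon
    obtain ⟨⟨δ, hδ, hmiss⟩, hnosafe⟩ := hcon
    obtain ⟨a, hlegal | ⟨-, f, hf⟩⟩ := h δ hδ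
    · exact Set.eq_empty_iff_forall_notMem.1 hmiss (δ a) ⟨⟨a, rfl⟩, hlegal⟩
    · exact hnosafe a f hf
  · rintro (hmeet | ⟨a, f, hf⟩) δ hδ
    · obtain ⟨_, ⟨a, rfl⟩, ha⟩ := hmeet δ hδ
      exact ⟨a, Or.inl ha⟩
    · by_cases hmeet : (supp δ ∩ L).Nonempty
      · obtain ⟨_, ⟨b, rfl⟩, hb⟩ := hmeet
        exact ⟨b, Or.inl hb⟩
      · exact ⟨a, Or.inr ⟨Set.not_nonempty_iff_eq_empty.1 hmeet, f, hf⟩⟩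

theorem SafeAction.of_law_subset {L M : Set α} {a : A} {f : α} (hLM : L ⊆ M) (hfM : f ∉ M)
    (hf : SafeAction (lawActions Δ L) (lawProhib Δ P L) a f) :
    SafeAction (lawActions Δ M) (lawProhib Δ P M) a f :=
  ⟨⟨hf.1.1, hfM⟩, fun δ hδ => hf.2 δ
    ⟨hδ.1, fun b => ⟨(hδ.2 b).1, fun hL => (hδ.2 b).2 (hLM hL)⟩⟩⟩

theorem GapFree.subsingleton_not_gapFree_insert {L : Set α} (h : GapFree Δ P L) :
    {d | ¬ GapFree Δ P (insert d L)}.Subsingleton := by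
  rcases (gapFree_iff_s16 Δ P).1 h with hmeet | ⟨a, f, hf⟩
  · intro d hd
    refine absurd ((gapFree_iff_s16 Δ P).2 (Or.inl fun δ hδ => ?_)) hd
    exact (hmeet δ hδ).mono (Set.inter_subset_inter_right _ (Set.subset_insert d L))
  · have eq_f : ∀ d, ¬ GapFree Δ P (insert d L) → d = f := fun d hd => by
      by_contra hdf
      refine hd ((gapFree_iff_s16 Δ P).2 (Or.inr ⟨a, f, ?_⟩))
      exact hf.of_law_subset Δ P (Set.subset_insert d L)
        fun hfdL => hfdL.elim (fun hfd => hdf hfd.symm) hf.1.2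
    intro d₁ h₁ d₂ h₂
    rw [eq_f d₁ h₁, eq_f d₂ h₂]

theorem exists_gapFree_diff_singleton {L : Set α} (hfin : L.Finite)
    (h : ∃ L' ⊂ L, GapFree Δ P L') : ∃ d ∈ L, GapFree Δ P (L \ {d}) := by
  have hfin' : {M | M ⊂ L ∧ GapFree Δ P M}.Finite :=
    hfin.finite_subsets.subset fun M hM => hM.1.subset
  obtain ⟨M, hmax⟩ := hfin'.exists_maximal h
  obtain ⟨hML, hM⟩ := hmax.prop
  obtain ⟨d, hdL, hdM⟩ := Set.exists_of_ssubset hML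
  refine ⟨d, hdL, ?_⟩
  suffices L \ {d} ⊆ M by
    rwa [this.antisymm fun x hx => ⟨hML.subset hx, fun hxd => hdM (hxd ▸ hx)⟩]
  intro x ⟨hxL, hxd⟩
  by_contra hxM
  have not_extend : ∀ y ∈ L, y ∉ M → ∀ z ∈ L, z ∉ M → z ≠ y → ¬ GapFree Δ P (insert y M) :=
    fun y hyL hyM z hzL hzM hzy hgap => hmax.not_prop_of_gt (Set.ssubset_insert hyM)
      ⟨⟨Set.insert_subset hyL hML.subset, fun hLy => (hLy hzL).elim hzy hzM⟩, hgap⟩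
  exact hxd (hM.subsingleton_not_gapFree_insert Δ P
    (not_extend x hxL hxM d hdL hdM (Ne.symm hxd)) (not_extend d hdL hdM x hxL hxM hxd))

end

theorem IsLaw.finite [Finite A] {Δ : A → Set α} {L : Set α} (hL : IsLaw Δ L)
    (hΔfin : ∀ a, (Δ a).Finite) : L.Finite :=
  (Set.finite_iUnion hΔfin).subset hL

theorem minimalGapFree_iff_remove_single_general {A α : Type*} [Fintype A]
    (Δ : A → Set α) (P : Set (A → α))
    (hΔfin : ∀ a, (Δ a).Finite)
    (L : Set α) (hL : IsLaw Δ L) (hgf : GapFree Δ P L) :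
    MinimalGapFree Δ P L ↔ ∀ d ∈ L, ¬ GapFree Δ P (L \ {d}) := by
  refine ⟨fun hmin d hd => hmin.2 _ (Set.sdiff_singleton_ssubset.2 hd),
    fun h => ⟨hgf, fun L' hL' hgf' => ?_⟩⟩
  obtain ⟨d, hd, hgfd⟩ := exists_gapFree_diff_singleton Δ P (hL.finite hΔfin) ⟨L', hL', hgf'⟩
  exact h d hd hgfd

/-- A gap-free law `L` in a game `(A, Δ, P)` is minimal if and
only if for each action `d ∈ L`, the law `L \ {d}` is not gap-free. -/
theorem minimalGapFree_iff_remove_single {A α : Type*} [Fintype A] [Nonempty A]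
    (Δ : A → Set α) (P : Set (A → α))
    (hΔfin : ∀ a, (Δ a).Finite) (hP : P ⊆ Profiles Δ)
    (L : Set α) (hL : IsLaw Δ L) (hgf : GapFree Δ P L) :
    MinimalGapFree Δ P L ↔ ∀ d ∈ L, ¬ GapFree Δ P (L \ {d}) :=
  minimalGapFree_iff_remove_single_general Δ P hΔfin L hL hgf

end MAS
end

section
/- Let L', L be laws in a game (A, Δ, P), let a ∈ A be an agent, and let d ∈ Δ_a^L be a safable action. Then the following are equivalent: (1) L' ⊆ L and d is a safe action of agent a in the law-imposed game (A, Δ^{L'}, P^{L'}); (2) L is a vertex cover of the hypergraph H^{a,d} and L' is a vertex cover of the induced subgraph (L, (E^{a,d})^L), where E^{a,d} is the edge set of H^{a,d}. -/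
namespace MAS

variable {A α : Type*}

theorem disjoint_supp_iff_inter_supp_diff_eq_empty {L : Set α} {δ : A → α} {a : A}
    (hdL : δ a ∉ L) : Disjoint (supp δ) L ↔ L ∩ (supp δ \ {δ a}) = ∅ := by
  rw [Set.disjoint_iff_inter_eq_empty, Set.inter_comm, ← Set.inter_sdiff_assoc,
    Set.sdiff_singleton_eq_self (fun h => hdL h.1)]

theorem safeAction_lawActions_iff {Δ : A → Set α} {P : Set (A → α)} (hP : P ⊆ Profiles Δ)
    (L : Set α) (a : A) (d : α) :
    SafeAction (lawActions Δ L) (lawProhib Δ P L) a d ↔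
      d ∈ lawActions Δ L a ∧ ∀ e ∈ Hedges P a d, (L ∩ e).Nonempty := by
  refine and_congr_right fun hd => ?_
  simp only [Hedges, Set.forall_mem_image, Set.mem_ofPred_eq, and_imp, lawProhib,
    Set.mem_inter_iff, mem_profiles_lawActions_iff, ne_eq, Set.nonempty_iff_ne_empty]
  refine forall₂_congr fun δ hδ => ?_
  constructor
  · rintro h rfl hempty
    exact h (hP hδ) ((disjoint_supp_iff_inter_supp_diff_eq_empty hd.2).2 hempty) rfl
  · rintro h - hdisj rfl
    exact h rfl ((disjoint_supp_iff_inter_supp_diff_eq_empty hd.2).1 hdisj)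

theorem isVC_inducedEdges_iff {E : Set (Set α)} {C C' : Set α} :
    IsVC C (inducedEdges E C) C' ↔ C' ⊆ C ∧ ∀ e ∈ E, (C' ∩ e).Nonempty := by
  refine and_congr_right fun hC' => ?_
  simp only [inducedEdges, Set.forall_mem_image, ← Set.inter_assoc,
    Set.inter_eq_left.2 hC']

theorem safeReduction_iff_isVC_general {A α : Type*}
    (Δ : A → Set α) (P : Set (A → α))
    (hP : P ⊆ Profiles Δ)
    (L' L : Set α) (hL : IsLaw Δ L)
    (a : A) (d : α) (hd : d ∈ lawActions Δ L a) :
    (L' ⊆ L ∧ SafeAction (lawActions Δ L') (lawProhib Δ P L') a d) ↔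
      (IsVC (Hvertices Δ d) (Hedges P a d) L ∧
        IsVC L (inducedEdges (Hedges P a d) L) L') := by
  have hLV : L ⊆ Hvertices Δ d := fun x hx => ⟨hL hx, fun hxd => hd.2 (hxd ▸ hx)⟩
  rw [safeAction_lawActions_iff hP, isVC_inducedEdges_iff]
  constructor
  · rintro ⟨hL'L, -, hcover⟩
    exact ⟨⟨hLV, fun e he => (hcover e he).mono (Set.inter_subset_inter_left e hL'L)⟩,
      hL'L, hcover⟩
  · rintro ⟨-, hL'L, hcover⟩
    exact ⟨hL'L, ⟨hd.1, fun hdL' => hd.2 (hL'L hdL')⟩, hcover⟩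

/-- Let `L', L` be laws in a game `(A, Δ, P)`, let `a ∈ A` be an
agent, and let `d ∈ Δ_a^L` be a safable action. Then `L' ⊆ L` and `d` is a safe
action of agent `a` in the law-imposed game `(A, Δ^{L'}, P^{L'})` if and only if
`L` is a vertex cover of the hypergraph `H^{a,d}` and `L'` is a vertex cover of
the induced subgraph `(L, (E^{a,d})^L)`. -/
theorem safeReduction_iff_isVC {A α : Type*} [Fintype A] [Nonempty A]
    (Δ : A → Set α) (P : Set (A → α))
    (hΔfin : ∀ a, (Δ a).Finite) (hP : P ⊆ Profiles Δ)
    (L' L : Set α) (hL' : IsLaw Δ L') (hL : IsLaw Δ L)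
    (a : A) (d : α) (hd : d ∈ lawActions Δ L a) (hdsaf : Safable Δ P d) :
    (L' ⊆ L ∧ SafeAction (lawActions Δ L') (lawProhib Δ P L') a d) ↔
      (IsVC (Hvertices Δ d) (Hedges P a d) L ∧
        IsVC L (inducedEdges (Hedges P a d) L) L') :=
  safeReduction_iff_isVC_general Δ P hP L' L hL a d hd

end MAS
end
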